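/- arXiv:1203.4791 — 3 statements merged into one kernel-verified Lean document; each statement's English description precedes it below -/
import Mathlib

section
/- For every odd prime p and every positive integer α, L(p^α) = α − 1 + L(p). -/
open Real Filter

/-- The Carmichael lambda function: the exponent of the multiplicative group `(ZMod n)ˣ`. -/
noncomputable def carmichael (n : ℕ) : ℕ := Monoid.exponent (ZMod n)ˣ

/-- `L n` is the smallest nonnegative integer `k` such that the `k`-th iterate of the
Carmichael function at `n` equals `1`. -/
noncomputable def L (n : ℕ) : ℕ := sInf {k | carmichael^[k] n = 1}

/-!
For an odd prime `p`, `λ(p^(α+1)) = p^α (p - 1) = lcm(p^α, p - 1)`, and since `λ`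
commutes with `lcm`, so do its iterates; hence `L (lcm a b) = max (L a) (L b)`. Therefore
`L (p^(α+1)) = 1 + max (L (p^α)) (L (p - 1))`, while `L p = 1 + L (p - 1)`, and induction on `α`
shows that the maximum is always attained by `L (p^α)`.
-/

namespace ArithmeticFunction

theorem carmichael_one : carmichael 1 = 1 := by
  rw [carmichael_eq_exponent one_ne_zero]
  exact Monoid.exp_eq_one_of_subsingleton

theorem carmichael_ne_zero {n : ℕ} (hn : n ≠ 0) : carmichael n ≠ 0 := by
  have : NeZero n := ⟨hn⟩
  rw [carmichael_eq_exponent hn]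
  exact Monoid.exponent_ne_zero_of_finite

theorem carmichael_lt {n : ℕ} (hn : 1 < n) : carmichael n < n :=
  (Nat.le_of_dvd (Nat.totient_pos.2 (by omega)) (carmichael_dvd_totient n)).trans_lt
    (Nat.totient_lt n hn)

theorem exists_iterate_carmichael_eq_one {n : ℕ} (hn : n ≠ 0) : ∃ k, carmichael^[k] n = 1 := by
  induction n using Nat.strong_induction_on with
  | _ n ih =>
    obtain rfl | hn1 : n = 1 ∨ 1 < n := by omega
    · exact ⟨0, rfl⟩
    · obtain ⟨k, hk⟩ := ih _ (carmichael_lt hn1) (carmichael_ne_zero hn)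
      exact ⟨k + 1, hk⟩

theorem iterate_carmichael_lcm (k a b : ℕ) :
    carmichael^[k] (a.lcm b) = (carmichael^[k] a).lcm (carmichael^[k] b) :=
  Function.Semiconj₂.iterate carmichael_lcm k a b

theorem carmichael_prime_pow_succ {p : ℕ} (hp : p.Prime) (hp₂ : p ≠ 2) (α : ℕ) :
    carmichael (p ^ (α + 1)) = (p ^ α).lcm (p - 1) := by
  have hcop : (p ^ α).Coprime (p - 1) :=
    Nat.Coprime.pow_left _ ((Nat.coprime_self_sub_right hp.one_lt.le).2 (Nat.coprime_one_right p))
  rw [carmichael_pow_of_prime_ne_two _ hp hp₂, Nat.totient_prime_pow_succ hp, hcop.lcm_eq_mul]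

theorem carmichael_prime {p : ℕ} (hp : p.Prime) : carmichael p = p - 1 := by
  have : Fact p.Prime := ⟨hp⟩
  rw [carmichael_eq_exponent hp.ne_zero, IsCyclic.exponent_eq_card, Nat.card_eq_fintype_card,
    ZMod.card_units_eq_totient, Nat.totient_prime hp]

end ArithmeticFunction

-- `ZMod 0 = ℤ`, so `carmichael 0 = 2`, whereas Mathlib's `λ 0 = 0`.
theorem carmichael_eq_arithmeticFunction_carmichael {n : ℕ} (hn : n ≠ 0) :
    carmichael n = ArithmeticFunction.carmichael n :=
  (ArithmeticFunction.carmichael_eq_exponent hn).symm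

theorem iterate_carmichael_eq_arithmeticFunction {n : ℕ} (hn : n ≠ 0) (k : ℕ) :
    carmichael^[k] n = ArithmeticFunction.carmichael^[k] n := by
  induction k generalizing n with
  | zero => rfl
  | succ k ih =>
    rw [Function.iterate_succ_apply, Function.iterate_succ_apply,
      ← ih (ArithmeticFunction.carmichael_ne_zero hn),
      carmichael_eq_arithmeticFunction_carmichael hn]

theorem L_le_iff {n k : ℕ} (hn : n ≠ 0) :
    L n ≤ k ↔ ArithmeticFunction.carmichael^[k] n = 1 := by
  have hL : L n = sInf {j | ArithmeticFunction.carmichael^[j] n = 1} := by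
    simp only [L, iterate_carmichael_eq_arithmeticFunction hn]
  refine ⟨fun hk => ?_, fun hk => hL ▸ Nat.sInf_le hk⟩
  have hLn : ArithmeticFunction.carmichael^[L n] n = 1 :=
    hL ▸ Nat.sInf_mem (ArithmeticFunction.exists_iterate_carmichael_eq_one hn)
  rw [← Nat.sub_add_cancel hk, Function.iterate_add_apply, hLn,
    Function.iterate_fixed ArithmeticFunction.carmichael_one]

theorem L_lcm {a b : ℕ} (ha : a ≠ 0) (hb : b ≠ 0) : L (a.lcm b) = max (L a) (L b) :=
  eq_of_forall_ge_iff fun k => by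
    rw [max_le_iff, L_le_iff (Nat.lcm_ne_zero ha hb), L_le_iff ha, L_le_iff hb,
      ArithmeticFunction.iterate_carmichael_lcm, Nat.lcm_eq_one_iff]

theorem L_eq_L_carmichael_add_one {n : ℕ} (hn : 1 < n) :
    L n = L (ArithmeticFunction.carmichael n) + 1 :=
  eq_of_forall_ge_iff fun k => by
    rw [L_le_iff (by omega)]
    cases k with
    | zero => simp only [Function.iterate_zero_apply]; omega
    | succ k =>
      rw [Function.iterate_succ_apply, Nat.add_le_add_iff_right,
        L_le_iff (ArithmeticFunction.carmichael_ne_zero (by omega))]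

/-- For every odd prime `p` and every positive integer `α`, `L (p^α) = α − 1 + L p`. -/
theorem L_odd_prime_power (p : ℕ) (hp : p.Prime) (hodd : Odd p) (α : ℕ) (hα : 1 ≤ α) :
    L (p ^ α) = α - 1 + L p := by
  have hp₂ : p ≠ 2 := by rintro rfl; exact absurd hodd (by decide)
  have hLp : L p = L (p - 1) + 1 := by
    rw [L_eq_L_carmichael_add_one hp.one_lt, ArithmeticFunction.carmichael_prime hp]
  induction α, hα using Nat.le_induction with
  | base => simp
  | succ α hα ih =>
    rw [L_eq_L_carmichael_add_one (Nat.one_lt_pow (by omega) hp.one_lt),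
      ArithmeticFunction.carmichael_prime_pow_succ hp hp₂,
      L_lcm (pow_ne_zero _ hp.ne_zero) (by have := hp.two_le; omega), ih]
    omega
end

section
/- Let δ > 0 and let S be a set of primes such that S(t) := #{p ∈ S : p ≤ t} satisfies S(t) ≪ t·exp(−(log t)^δ) for all t ≥ 2. Then for all 2 ≤ Y ≤ x, the number of positive integers n ≤ x divisible by some prime p ∈ S with p > Y is O(x·exp(−(log x)^δ) + x/log x + x/log Y), where the implied constant depends only on δ and the implied constant in the hypothesis. -/
/-!
Every counted `n` has a divisor `p ∈ S` with `Y < p ≤ x`, so the count is at most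
`x · ∑ 1/p` over these primes. On a dyadic block `[2^k, 2^(k+1))` the hypothesis bounds the
sum of `1/p` by `2 C₀ exp(-((k+1) log 2)^δ)`, and comparing with the `m`-th term of the
exponential series, `m = ⌈2/δ⌉`, gives `exp(-b^δ) ≤ m!/b²`; so the block sums are
`O(1/k²)`, and the blocks with `2^k ≥ Y` add up to `O(1/log Y)`. The count is therefore
`O(x / log Y)` alone.
-/

open Real Finset
open scoped Nat

theorem card_filter_exists_dvd_le (N : ℕ) (P : Finset ℕ) :
    (#{n ∈ Ioc 0 N | ∃ p ∈ P, p ∣ n} : ℝ) ≤ N * ∑ p ∈ P, (p : ℝ)⁻¹ := by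
  have hcover : {n ∈ Ioc 0 N | ∃ p ∈ P, p ∣ n} = P.biUnion fun p ↦ {n ∈ Ioc 0 N | p ∣ n} := by
    ext n
    simp only [mem_filter, mem_biUnion]
    tauto
  calc (#{n ∈ Ioc 0 N | ∃ p ∈ P, p ∣ n} : ℝ) ≤ ∑ p ∈ P, ((N / p : ℕ) : ℝ) := by
        rw [hcover]
        exact_mod_cast card_biUnion_le.trans_eq
          (sum_congr rfl fun p _ ↦ Nat.Ioc_filter_dvd_card_eq_div N p)
    _ ≤ ∑ p ∈ P, (N : ℝ) / p := sum_le_sum fun p _ ↦ Nat.cast_div_le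
    _ = N * ∑ p ∈ P, (p : ℝ)⁻¹ := by simp only [mul_sum, div_eq_mul_inv]

theorem sum_inv_le_sum_card_lt_two_pow_div (A : Finset ℕ) :
    ∑ a ∈ A, (a : ℝ)⁻¹ ≤
      ∑ k ∈ A.image (Nat.log 2), (#{a ∈ A | a < 2 ^ (k + 1)} : ℝ) / 2 ^ k := by
  rw [← sum_fiberwise_of_maps_to fun a ha ↦ mem_image_of_mem (Nat.log 2) ha]
  refine sum_le_sum fun k _ ↦ ?_
  have hterm : ∀ a ∈ A.filter (Nat.log 2 · = k), (a : ℝ)⁻¹ ≤ ((2 : ℝ) ^ k)⁻¹ := by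
    rintro a ha
    rcases eq_or_ne a 0 with rfl | ha0
    · simp
    · rw [← (mem_filter.1 ha).2]
      exact inv_anti₀ (by positivity) (by exact_mod_cast Nat.pow_log_le_self 2 ha0)
  have hcard : #{a ∈ A | Nat.log 2 a = k} ≤ #{a ∈ A | a < 2 ^ (k + 1)} :=
    card_le_card <| monotone_filter_right A fun a _ hk ↦ hk ▸ Nat.lt_pow_succ_log_self one_lt_two a
  calc ∑ a ∈ A with Nat.log 2 a = k, (a : ℝ)⁻¹ ≤ #{a ∈ A | Nat.log 2 a = k} • ((2 : ℝ) ^ k)⁻¹ :=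
        sum_le_card_nsmul _ _ _ hterm
    _ ≤ (#{a ∈ A | a < 2 ^ (k + 1)} : ℝ) / 2 ^ k := by
        rw [nsmul_eq_mul, ← div_eq_mul_inv]
        gcongr

theorem sum_one_div_mul_succ_le {K : ℕ} (hK : 0 < K) {I : Finset ℕ} (hI : ∀ k ∈ I, K ≤ k) :
    ∑ k ∈ I, (1 : ℝ) / (k * (k + 1)) ≤ 1 / K := by
  set n := K + I.sup id + 1
  have hsub : I ⊆ Ico K n := fun k hk ↦
    mem_Ico.2 ⟨hI k hk, Nat.lt_succ_of_le ((le_sup (f := id) hk).trans (Nat.le_add_left _ _))⟩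
  have htelescope : ∑ k ∈ Ico K n, (1 : ℝ) / (k * (k + 1)) = 1 / K - 1 / n :=
    calc ∑ k ∈ Ico K n, (1 : ℝ) / (k * (k + 1))
        = ∑ k ∈ Ico K n, (-1 / ((k + 1 : ℕ) : ℝ) - -1 / k) := by
          refine sum_congr rfl fun k hk ↦ ?_
          have : (0 : ℝ) < k := by exact_mod_cast hK.trans_le (mem_Ico.1 hk).1
          push_cast
          field_simp
          ring
      _ = 1 / K - 1 / n := by
          rw [sum_Ico_sub (fun k : ℕ ↦ -1 / (k : ℝ)) (by omega)]
          ring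
  calc ∑ k ∈ I, (1 : ℝ) / (k * (k + 1)) ≤ ∑ k ∈ Ico K n, (1 : ℝ) / (k * (k + 1)) :=
        sum_le_sum_of_subset_of_nonneg hsub fun _ _ _ ↦ by positivity
    _ ≤ 1 / K := by rw [htelescope]; linarith [show (0 : ℝ) ≤ 1 / n by positivity]

theorem exp_neg_rpow_le_factorial_div_sq {δ b : ℝ} (hδ : 0 < δ) (hb : 1 ≤ b) :
    exp (-(b ^ δ)) ≤ (⌈2 / δ⌉₊)! / b ^ 2 := by
  set m := ⌈2 / δ⌉₊
  have hexp : b ^ (δ * m) / m ! ≤ exp (b ^ δ) := by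
    rw [rpow_mul (by linarith), rpow_natCast]
    exact pow_div_factorial_le_exp _ (by positivity) m
  have hδm : 2 ≤ δ * m := by
    have := Nat.le_ceil (2 / δ)
    rw [div_le_iff₀ hδ] at this
    linarith
  have hsq : b ^ 2 ≤ b ^ (δ * m) := by
    rw [← rpow_two]
    exact rpow_le_rpow_of_exponent_le hb hδm
  rw [exp_neg, inv_le_comm₀ (exp_pos _) (by positivity), inv_div]
  calc b ^ 2 / m ! ≤ b ^ (δ * m) / m ! := by gcongr
    _ ≤ exp (b ^ δ) := hexp

theorem exp_neg_log_two_pow_rpow_le {δ : ℝ} (hδ : 0 < δ) {k : ℕ} (hk : 0 < k) :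
    exp (-(log ((2 : ℝ) ^ (k + 1)) ^ δ)) ≤ 4 * (⌈2 / δ⌉₊)! / (k * (k + 1)) := by
  have hk1 : (1 : ℝ) ≤ k := by exact_mod_cast hk
  have hb : (k + 1 : ℝ) / 2 ≤ log (2 ^ (k + 1)) := by
    rw [log_pow]
    push_cast
    nlinarith [log_two_gt_d9]
  calc exp (-(log ((2 : ℝ) ^ (k + 1)) ^ δ)) ≤ (⌈2 / δ⌉₊)! / log ((2 : ℝ) ^ (k + 1)) ^ 2 :=
        exp_neg_rpow_le_factorial_div_sq hδ (by linarith)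
    _ ≤ (⌈2 / δ⌉₊)! / ((k + 1) / 2) ^ 2 := by gcongr
    _ ≤ 4 * (⌈2 / δ⌉₊)! / (k * (k + 1)) := by
        rw [div_le_div_iff₀ (by positivity) (by positivity)]
        have : (0 : ℝ) < (⌈2 / δ⌉₊)! := by positivity
        nlinarith

theorem card_filter_lt_le_ncard {S : Set ℕ} {A : Finset ℕ} (hAS : ↑A ⊆ S) (n : ℕ) :
    #{a ∈ A | a < n} ≤ {p : ℕ | p ∈ S ∧ (p : ℝ) ≤ n}.ncard := by
  rw [← Set.ncard_coe_finset]
  refine Set.ncard_le_ncard (fun a ha ↦ ?_) ((Set.finite_Iic n).subset fun p hp ↦ ?_)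
  · obtain ⟨haA, han⟩ := mem_filter.1 ha
    exact ⟨hAS haA, by exact_mod_cast han.le⟩
  · exact_mod_cast hp.2

theorem sum_inv_le_of_ncard_le {δ C₀ : ℝ} (hδ : 0 < δ) (hC₀ : 0 ≤ C₀) {S : Set ℕ}
    (hS : ∀ t : ℝ, 2 ≤ t →
      ({p : ℕ | p ∈ S ∧ (p : ℝ) ≤ t}.ncard : ℝ) ≤ C₀ * t * exp (-(log t ^ δ)))
    {A : Finset ℕ} (hAS : ↑A ⊆ S) {K : ℕ} (hK : 0 < K) (hAK : ∀ a ∈ A, K ≤ Nat.log 2 a) :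
    ∑ a ∈ A, (a : ℝ)⁻¹ ≤ 8 * C₀ * (⌈2 / δ⌉₊)! / K := by
  set m := ⌈2 / δ⌉₊
  have hblock : ∀ k : ℕ, 0 < k →
      (#{a ∈ A | a < 2 ^ (k + 1)} : ℝ) / 2 ^ k ≤ 8 * C₀ * m ! * (1 / (k * (k + 1))) := by
    intro k hk
    have hcount : (#{a ∈ A | a < 2 ^ (k + 1)} : ℝ) ≤
        C₀ * 2 ^ (k + 1) * exp (-(log ((2 : ℝ) ^ (k + 1)) ^ δ)) := by
      have := card_filter_lt_le_ncard hAS (2 ^ (k + 1))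
      push_cast at this
      exact (Nat.cast_le.2 this).trans (hS _ (le_self_pow₀ one_le_two k.succ_ne_zero))
    calc (#{a ∈ A | a < 2 ^ (k + 1)} : ℝ) / 2 ^ k
        ≤ C₀ * 2 ^ (k + 1) * exp (-(log ((2 : ℝ) ^ (k + 1)) ^ δ)) / 2 ^ k := by gcongr
      _ = 2 * C₀ * exp (-(log ((2 : ℝ) ^ (k + 1)) ^ δ)) := by
          rw [pow_succ]
          field_simp
      _ ≤ 2 * C₀ * (4 * m ! / (k * (k + 1))) := by
          gcongr
          exact exp_neg_log_two_pow_rpow_le hδ hk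
      _ = 8 * C₀ * m ! * (1 / (k * (k + 1))) := by ring
  have hIK : ∀ k ∈ A.image (Nat.log 2), K ≤ k := by
    simpa only [mem_image, forall_exists_index, and_imp, forall_apply_eq_imp_iff₂] using hAK
  calc ∑ a ∈ A, (a : ℝ)⁻¹
      ≤ ∑ k ∈ A.image (Nat.log 2), (#{a ∈ A | a < 2 ^ (k + 1)} : ℝ) / 2 ^ k :=
        sum_inv_le_sum_card_lt_two_pow_div A
    _ ≤ ∑ k ∈ A.image (Nat.log 2), 8 * C₀ * m ! * (1 / (k * (k + 1))) :=
        sum_le_sum fun k hk ↦ hblock k (hK.trans_le (hIK k hk))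
    _ = 8 * C₀ * m ! * ∑ k ∈ A.image (Nat.log 2), (1 : ℝ) / (k * (k + 1)) := (mul_sum ..).symm
    _ ≤ 8 * C₀ * m ! * (1 / K) := by
        gcongr
        exact sum_one_div_mul_succ_le hK hIK
    _ = 8 * C₀ * m ! / K := by ring

open Classical in
theorem ncard_exists_dvd_le_mul_sum_inv (S : Set ℕ) (Y : ℝ) {x : ℝ} (hx : 0 ≤ x) :
    ({n : ℕ | 1 ≤ n ∧ (n : ℝ) ≤ x ∧ ∃ p ∈ S, Y < (p : ℝ) ∧ p ∣ n}.ncard : ℝ) ≤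
      x * ∑ p ∈ Ioc 0 ⌊x⌋₊ with p ∈ S ∧ Y < p, (p : ℝ)⁻¹ := by
  set P : Finset ℕ := {p ∈ Ioc 0 ⌊x⌋₊ | p ∈ S ∧ Y < p}
  have hcover : {n : ℕ | 1 ≤ n ∧ (n : ℝ) ≤ x ∧ ∃ p ∈ S, Y < (p : ℝ) ∧ p ∣ n}.ncard ≤
      #{n ∈ Ioc 0 ⌊x⌋₊ | ∃ p ∈ P, p ∣ n} := by
    rw [← Set.ncard_coe_finset]
    refine Set.ncard_le_ncard ?_ (finite_toSet _)
    rintro n ⟨hn, hnx, p, hpS, hYp, hpn⟩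
    have hnN : n ≤ ⌊x⌋₊ := Nat.le_floor hnx
    have hpP : p ∈ P := mem_filter.2
      ⟨mem_Ioc.2 ⟨Nat.pos_of_dvd_of_pos hpn hn, (Nat.le_of_dvd hn hpn).trans hnN⟩, hpS, hYp⟩
    exact mem_filter.2 ⟨mem_Ioc.2 ⟨hn, hnN⟩, p, hpP, hpn⟩
  calc ({n : ℕ | 1 ≤ n ∧ (n : ℝ) ≤ x ∧ ∃ p ∈ S, Y < (p : ℝ) ∧ p ∣ n}.ncard : ℝ)
      ≤ ⌊x⌋₊ * ∑ p ∈ P, (p : ℝ)⁻¹ := (Nat.cast_le.2 hcover).trans (card_filter_exists_dvd_le _ P)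
    _ ≤ x * ∑ p ∈ P, (p : ℝ)⁻¹ := by gcongr; exact Nat.floor_le hx

theorem log_le_two_mul_log_two_floor {Y : ℝ} (hY : 2 ≤ Y) : log Y ≤ 2 * Nat.log 2 ⌊Y⌋₊ := by
  set K := Nat.log 2 ⌊Y⌋₊
  have hK : (1 : ℝ) ≤ K := by
    exact_mod_cast Nat.log_pos one_lt_two (Nat.le_floor (by exact_mod_cast hY))
  have hYK : Y < 2 ^ (K + 1) :=
    calc Y < ⌊Y⌋₊ + 1 := Nat.lt_floor_add_one Y
      _ ≤ 2 ^ (K + 1) := by exact_mod_cast Nat.lt_pow_succ_log_self one_lt_two _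
  have hlog := log_lt_log (by linarith) hYK
  rw [log_pow] at hlog
  push_cast at hlog
  nlinarith [log_two_lt_d9]

/-- If `S` is a set of primes with counting function `S(t) ≪ t·exp(−(log t)^δ)` for some
`δ > 0`, then for all `2 ≤ Y ≤ x`, the number of `n ≤ x` divisible by some prime `p ∈ S`
with `p > Y` is `O(x·exp(−(log x)^δ) + x/log x + x/log Y)`, uniformly over such `S`. -/
theorem count_divisible_by_very_sparse_primes (δ C₀ : ℝ) (hδ : 0 < δ) (hC₀ : 0 < C₀) :
    ∃ C : ℝ, 0 < C ∧ ∀ S : Set ℕ, (∀ p ∈ S, p.Prime) →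
      (∀ t : ℝ, 2 ≤ t →
        ({p : ℕ | p ∈ S ∧ (p : ℝ) ≤ t}.ncard : ℝ) ≤ C₀ * t * Real.exp (-(Real.log t ^ δ))) →
      ∀ Y x : ℝ, 2 ≤ Y → Y ≤ x →
        ({n : ℕ | 1 ≤ n ∧ (n : ℝ) ≤ x ∧
            ∃ p ∈ S, Y < (p : ℝ) ∧ p ∣ n}.ncard : ℝ)
          ≤ C * (x * Real.exp (-(Real.log x ^ δ)) + x / Real.log x + x / Real.log Y) := by
  classical
  set c := 8 * C₀ * (⌈2 / δ⌉₊)!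
  have hc : 0 < c := by positivity
  refine ⟨2 * c, by positivity, fun S _ hS Y x hY hYx ↦ ?_⟩
  set K := Nat.log 2 ⌊Y⌋₊
  have hK : 0 < K := Nat.log_pos one_lt_two (Nat.le_floor (by exact_mod_cast hY))
  have hx : 0 ≤ x := by linarith
  have hlogY : 0 < log Y := log_pos (by linarith)
  have hKY : c / K ≤ 2 * c / log Y := by
    rw [div_le_div_iff₀ (by positivity) hlogY]
    nlinarith [log_le_two_mul_log_two_floor hY]
  calc ({n : ℕ | 1 ≤ n ∧ (n : ℝ) ≤ x ∧ ∃ p ∈ S, Y < (p : ℝ) ∧ p ∣ n}.ncard : ℝ)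
      ≤ x * ∑ p ∈ Ioc 0 ⌊x⌋₊ with p ∈ S ∧ Y < p, (p : ℝ)⁻¹ :=
        ncard_exists_dvd_le_mul_sum_inv S Y hx
    _ ≤ x * (2 * c / log Y) := by
        gcongr
        exact (sum_inv_le_of_ncard_le hδ hC₀.le hS (fun p hp ↦ (mem_filter.1 hp).2.1) hK
          fun p hp ↦ Nat.log_mono_right (Nat.floor_le_of_le (mem_filter.1 hp).2.2.le)).trans hKY
    _ ≤ 2 * c * (x * exp (-(log x ^ δ)) + x / log x + x / log Y) := by
        have h₁ : 0 ≤ x * exp (-(log x ^ δ)) := mul_nonneg hx (exp_pos _).le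
        have h₂ : 0 ≤ x / log x := div_nonneg hx (log_nonneg (by linarith))
        rw [mul_div_assoc', mul_comm x, mul_div_assoc]
        gcongr
        linarith
end

section
/- Let k be a positive integer, M ≥ 3 and P ≥ 2 real numbers, and let α_1, ..., α_k be integers with 2 ≤ α_i ≤ M for all i and ∏_{i=1}^k α_i ≤ P. Then ∑_{i=1}^k α_i ≤ 2k + M·(log P)/(log M). -/
open Real

/-! The concavity of `log` puts its graph above the chord from `(1, 0)` to `(M, log M)`, i.e.
`(x - 1) log M ≤ (M - 1) log x` on `[1, M]`. Summing over the terms turns the product bound into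
`(∑ αᵢ - k) log M ≤ (M - 1) log P`. -/

namespace Real

theorem sub_one_mul_log_le_sub_one_mul_log {x M : ℝ} (hx : 1 ≤ x) (hxM : x ≤ M) :
    (x - 1) * log M ≤ (M - 1) * log x := by
  rcases hx.eq_or_lt with rfl | hx
  · simp
  rcases hxM.eq_or_lt with rfl | hxM
  · rw [mul_comm]
  have h := strictConcaveOn_log_Ioi.concaveOn.neg.secant_mono_aux1
    (Set.mem_Ioi.2 one_pos) (Set.mem_Ioi.2 (by linarith : (0 : ℝ) < M)) hx hxM
  simp only [Pi.neg_apply, log_one] at h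
  linarith

end Real

theorem Finset.sum_sub_card_mul_log_le_sub_one_mul_log_prod {ι : Type*} (s : Finset ι)
    {f : ι → ℝ} {M : ℝ} (hf₁ : ∀ i ∈ s, 1 ≤ f i) (hfM : ∀ i ∈ s, f i ≤ M) :
    (∑ i ∈ s, f i - s.card) * log M ≤ (M - 1) * log (∏ i ∈ s, f i) := by
  rw [log_prod fun i hi => (zero_lt_one.trans_le (hf₁ i hi)).ne', Finset.mul_sum,
    Finset.card_eq_sum_ones, Nat.cast_sum, ← Finset.sum_sub_distrib, Finset.sum_mul]
  exact Finset.sum_le_sum fun i hi => by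
    simpa using sub_one_mul_log_le_sub_one_mul_log (hf₁ i hi) (hfM i hi)

theorem sum_le_of_prod_le_general (k : ℕ) (M P : ℝ) (hM : 3 ≤ M)
    (α : Fin k → ℕ) (hlo : ∀ i, 2 ≤ α i) (hhi : ∀ i, (α i : ℝ) ≤ M)
    (hprod : ((∏ i, α i : ℕ) : ℝ) ≤ P) :
    ((∑ i, α i : ℕ) : ℝ) ≤ 2 * k + M * Real.log P / Real.log M := by
  have hα₁ : ∀ i, (1 : ℝ) ≤ α i := fun i => by exact_mod_cast (hlo i).trans' one_le_two
  have hchord := Finset.univ.sum_sub_card_mul_log_le_sub_one_mul_log_prod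
    (fun i _ => hα₁ i) (fun i _ => hhi i)
  rw [Finset.card_univ, Fintype.card_fin] at hchord
  have hprod₁ : (1 : ℝ) ≤ ∏ i, (α i : ℝ) := Finset.one_le_prod fun i _ => hα₁ i
  have hlogP : log (∏ i, (α i : ℝ)) ≤ log P := log_le_log (by linarith) (by exact_mod_cast hprod)
  have hlogP₀ : 0 ≤ log P := (log_nonneg hprod₁).trans hlogP
  have hbound : (∑ i, (α i : ℝ) - k) * log M ≤ M * log P :=
    calc (∑ i, (α i : ℝ) - k) * log M ≤ (M - 1) * log (∏ i, (α i : ℝ)) := hchord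
      _ ≤ (M - 1) * log P := by gcongr; linarith
      _ ≤ M * log P := mul_le_mul_of_nonneg_right (by linarith) hlogP₀
  rw [← le_div_iff₀ (log_pos (by linarith))] at hbound
  push_cast
  linarith [k.cast_nonneg (α := ℝ)]

/-- If `2 ≤ α_i ≤ M` for all `i` and `∏ α_i ≤ P` (with `M ≥ 3`, `P ≥ 2`), then
`∑ α_i ≤ 2k + M·(log P)/(log M)`. -/
theorem sum_le_of_prod_le (k : ℕ) (hk : 1 ≤ k) (M P : ℝ) (hM : 3 ≤ M) (hP : 2 ≤ P)
    (α : Fin k → ℕ) (hlo : ∀ i, 2 ≤ α i) (hhi : ∀ i, (α i : ℝ) ≤ M)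
    (hprod : ((∏ i, α i : ℕ) : ℝ) ≤ P) :
    ((∑ i, α i : ℕ) : ℝ) ≤ 2 * k + M * Real.log P / Real.log M :=
  sum_le_of_prod_le_general k M P hM α hlo hhi hprod
end
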